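/- arXiv:1706.05147 — 2 statements merged into one kernel-verified Lean document; each statement's English description precedes it below -/
import Mathlib

section
/- Let U₀ ∈ ℂ^{N×N} and U₁ ∈ ℂ^{K×K} be unitary matrices with N = MK, and define downsampling D : ℂ^N → ℂ^K by D f = U₁ S_d U₀* f with S_d = [I_K I_K ⋯ I_K] (M blocks), and upsampling U : ℂ^K → ℂ^N by U g = U₀ S_u U₁* g where S_u = [I_K; I_K; ⋯; I_K] (M blocks stacked vertically), i.e., S_u = S_dᵀ. If f ∈ ℂ^N is spectrally bandlimited, meaning (U₀* f)[k] = 0 for all k ≥ K, then applying the ideal low-pass filter H (which zeros all graph Fourier coefficients with index ≥ K) after upsampling recovers f exactly: U₀ H U₀* U D f = f. -/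
open Matrix

/-- Corollary 3: a spectrally bandlimited graph signal is perfectly recovered from its
(GD2)-downsampled version by (GU2) upsampling followed by ideal low-pass filtering:
`U₀ H U₀* U D f = f`. -/
theorem spectral_sampling_perfect_recovery (N M K : ℕ) (hM : 0 < M) (hK : 0 < K)
    (hN : N = M * K)
    (U₀ : Matrix (Fin N) (Fin N) ℂ) (U₁ : Matrix (Fin K) (Fin K) ℂ)
    (hU₀ : U₀ ∈ Matrix.unitaryGroup (Fin N) ℂ)
    (hU₁ : U₁ ∈ Matrix.unitaryGroup (Fin K) ℂ)
    (Sd : Matrix (Fin K) (Fin N) ℂ)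
    (hSd : ∀ (k : Fin K) (n : Fin N), Sd k n = if (n : ℕ) % K = (k : ℕ) then 1 else 0)
    (H : Matrix (Fin N) (Fin N) ℂ)
    (hH : H = Matrix.diagonal (fun i : Fin N => if (i : ℕ) < K then 1 else 0))
    (f : Fin N → ℂ)
    (hband : ∀ k : Fin N, K ≤ (k : ℕ) → (U₀ᴴ *ᵥ f) k = 0) :
    U₀ *ᵥ (H *ᵥ (U₀ᴴ *ᵥ (U₀ *ᵥ (Sdᵀ *ᵥ (U₁ᴴ *ᵥ (U₁ *ᵥ (Sd *ᵥ (U₀ᴴ *ᵥ f)))))))) = f := by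
  have hU₁' : U₁ᴴ * U₁ = 1 := hU₁.1
  have hU₀' : U₀ᴴ * U₀ = 1 := hU₀.1
  have hU₀'' : U₀ * U₀ᴴ = 1 := hU₀.2
  set g := U₀ᴴ *ᵥ f with hg
  have h1 : U₁ᴴ *ᵥ (U₁ *ᵥ (Sd *ᵥ g)) = Sd *ᵥ g := by
    rw [mulVec_mulVec, hU₁', one_mulVec]
  rw [h1]
  have h2 : U₀ᴴ *ᵥ (U₀ *ᵥ (Sdᵀ *ᵥ (Sd *ᵥ g))) = Sdᵀ *ᵥ (Sd *ᵥ g) := by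
    rw [mulVec_mulVec, hU₀', one_mulVec]
  rw [h2]
  have h3 : H *ᵥ (Sdᵀ *ᵥ (Sd *ᵥ g)) = g := by
    funext i
    rw [hH, mulVec_diagonal]
    by_cases hi : (i : ℕ) < K
    · rw [if_pos hi, one_mul]
      have hiK : (i : ℕ) % K = (i : ℕ) := Nat.mod_eq_of_lt hi
      have hSum : (Sdᵀ *ᵥ (Sd *ᵥ g)) i = (Sd *ᵥ g) ⟨(i : ℕ), hi⟩ := by
        simp only [mulVec, dotProduct, transpose_apply]
        have := Finset.sum_eq_single_of_mem (s := Finset.univ)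
          (f := fun k => Sd k i * ∑ m, Sd k m * g m) (⟨(i : ℕ), hi⟩ : Fin K)
          (Finset.mem_univ _)
          (fun k _ hk => by
            rw [hSd, hiK, if_neg (fun h => hk (Fin.ext h.symm)), zero_mul])
        rw [this, hSd, hiK, if_pos rfl, one_mul]
      rw [hSum]
      have hterm : ∀ m : Fin N, m ∈ Finset.univ → m ≠ i →
          Sd ⟨(i : ℕ), hi⟩ m * g m = 0 := by
        intro m _ hm
        by_cases hmK : (m : ℕ) < K
        · rw [hSd, if_neg, zero_mul]
          intro h
          rw [Nat.mod_eq_of_lt hmK] at h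
          exact hm (Fin.ext h)
        · rw [hband m (le_of_not_gt hmK), mul_zero]
      have := Finset.sum_eq_single_of_mem (s := Finset.univ)
        (f := fun m => Sd ⟨(i : ℕ), hi⟩ m * g m) i (Finset.mem_univ _) hterm
      show ∑ m, Sd ⟨(i : ℕ), hi⟩ m * g m = g i
      rw [this, hSd, hiK, if_pos rfl, one_mul]
    · rw [if_neg hi, zero_mul]
      exact (hband i (le_of_not_gt hi)).symm
  rw [h3, hg, mulVec_mulVec, hU₀'', one_mulVec]
end

section
/- Let N = 2K and define the modified downsampling matrix S_d' = [I_K J_K] ∈ ℝ^{K×N}, where J_K is the K×K counter-identity (anti-diagonal) matrix. Then S_d' S_d'ᵀ = 2 I_K, and for any unitary matrices U₀ ∈ ℂ^{N×N}, U₁ ∈ ℂ^{K×K}, a graph signal f ∈ ℂ^N that is bandlimited to the first K graph Fourier coefficients ((U₀* f)[k] = 0 for k ≥ K) is recovered exactly from its (GD2')-downsampled version f_d = U₁ S_d' U₀* f by flip-repetition upsampling and ideal low-pass filtering: U₀ H [I_K; J_K] U₁* f_d = f, where H retains only the first K spectral coefficients. -/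
open Matrix

private lemma sum_delta' {M : ℕ} (a : ℕ) (ha : a < M) (c : Fin M → ℂ) :
    ∑ n : Fin M, (if (n : ℕ) = a then c n else 0) = c ⟨a, ha⟩ := by
  rw [Finset.sum_eq_single (⟨a, ha⟩ : Fin M)]
  · simp
  · intro b _ hb
    have : (b : ℕ) ≠ a := fun h => hb (Fin.ext h)
    simp [this]
  · simp

/-- (GD2') with `S_d' = [I_K  J_K]`: the counter-identity satisfies `J² = I`,
`S_d' S_d'ᵀ = 2I`, and a signal bandlimited to the first `K` graph Fourier
coefficients is perfectly recovered by flip-repetition upsampling and ideal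
low-pass filtering. -/
theorem modified_spectral_sampling_recovery (N K : ℕ) (hK : 0 < K) (hN : N = 2 * K)
    (J : Matrix (Fin K) (Fin K) ℂ)
    (hJ : ∀ i j : Fin K, J i j = if (i : ℕ) + (j : ℕ) = K - 1 then 1 else 0)
    (Sd' : Matrix (Fin K) (Fin N) ℂ)
    (hSd' : ∀ (k : Fin K) (n : Fin N),
      Sd' k n = if (n : ℕ) < K then (if (n : ℕ) = (k : ℕ) then 1 else 0)
        else (if (n : ℕ) = 2 * K - 1 - (k : ℕ) then 1 else 0))
    (U₀ : Matrix (Fin N) (Fin N) ℂ) (U₁ : Matrix (Fin K) (Fin K) ℂ)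
    (hU₀ : U₀ ∈ Matrix.unitaryGroup (Fin N) ℂ)
    (hU₁ : U₁ ∈ Matrix.unitaryGroup (Fin K) ℂ)
    (H : Matrix (Fin N) (Fin N) ℂ)
    (hH : H = Matrix.diagonal (fun i : Fin N => if (i : ℕ) < K then 1 else 0)) :
    J * J = 1 ∧
    Sd' * Sd'ᵀ = (2 : ℂ) • (1 : Matrix (Fin K) (Fin K) ℂ) ∧
    ∀ f : Fin N → ℂ, (∀ k : Fin N, K ≤ (k : ℕ) → (U₀ᴴ *ᵥ f) k = 0) →
      U₀ *ᵥ (H *ᵥ (Sd'ᵀ *ᵥ (U₁ᴴ *ᵥ (U₁ *ᵥ (Sd' *ᵥ (U₀ᴴ *ᵥ f)))))) = f := by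
  subst hH hN
  refine ⟨?_, ?_, ?_⟩
  · -- J * J = 1
    ext i j
    simp only [Matrix.mul_apply, hJ]
    have hi := i.isLt
    have hj := j.isLt
    have hterm : ∀ b : Fin K,
        (if (i : ℕ) + (b : ℕ) = K - 1 then (1 : ℂ) else 0) *
          (if (b : ℕ) + (j : ℕ) = K - 1 then (1 : ℂ) else 0) =
        if (b : ℕ) = K - 1 - (i : ℕ) then
          (if (b : ℕ) + (j : ℕ) = K - 1 then (1 : ℂ) else 0) else 0 := by
      intro b
      have hb := b.isLt
      by_cases h : (b : ℕ) = K - 1 - (i : ℕ)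
      · rw [if_pos h, if_pos (show (i : ℕ) + (b : ℕ) = K - 1 by omega), one_mul]
      · have h1 : ¬((i : ℕ) + (b : ℕ) = K - 1) := by omega
        rw [if_neg h, if_neg h1, zero_mul]
    simp_rw [hterm]
    rw [sum_delta' (K - 1 - (i : ℕ)) (by omega)]
    simp only [Matrix.one_apply]
    have heq : (((⟨K - 1 - (i : ℕ), by omega⟩ : Fin K) : ℕ) + (j : ℕ) = K - 1) ↔ i = j := by
      rw [Fin.ext_iff]
      show K - 1 - (i : ℕ) + (j : ℕ) = K - 1 ↔ (i : ℕ) = (j : ℕ); omega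
    by_cases h : i = j
    · rw [if_pos (heq.mpr h), if_pos h]
    · rw [if_neg (fun hh => h (heq.mp hh)), if_neg h]
  · -- Sd' * Sd'ᵀ = 2 • 1
    ext k l
    have hk := k.isLt
    have hl := l.isLt
    simp only [Matrix.mul_apply, Matrix.transpose_apply, hSd', Matrix.smul_apply,
      Matrix.one_apply, smul_eq_mul]
    have hterm : ∀ n : Fin (2 * K),
        (if (n : ℕ) < K then (if (n : ℕ) = (k : ℕ) then (1 : ℂ) else 0)
            else (if (n : ℕ) = 2 * K - 1 - (k : ℕ) then 1 else 0)) *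
        (if (n : ℕ) < K then (if (n : ℕ) = (l : ℕ) then (1 : ℂ) else 0)
            else (if (n : ℕ) = 2 * K - 1 - (l : ℕ) then 1 else 0)) =
        (if (n : ℕ) = (k : ℕ) then (if (n : ℕ) = (l : ℕ) then (1 : ℂ) else 0) else 0) +
        (if (n : ℕ) = 2 * K - 1 - (k : ℕ) then
            (if (n : ℕ) = 2 * K - 1 - (l : ℕ) then (1 : ℂ) else 0) else 0) := by
      intro n
      have hn := n.isLt
      split_ifs <;> first | (exfalso; omega) | ring1 | norm_num
    simp_rw [hterm, Finset.sum_add_distrib]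
    rw [sum_delta' (k : ℕ) (by omega), sum_delta' (2 * K - 1 - (k : ℕ)) (by omega)]
    simp only
    by_cases h : k = l
    · subst h
      rw [if_pos rfl, if_pos rfl, if_pos rfl]
      norm_num
    · have h1 : ¬((k : ℕ) = (l : ℕ)) := fun hh => h (Fin.ext hh)
      have h2 : ¬(2 * K - 1 - (k : ℕ) = 2 * K - 1 - (l : ℕ)) := by omega
      rw [if_neg h1, if_neg h2, if_neg h]
      norm_num
  · -- recovery
    intro f hf
    set g := U₀ᴴ *ᵥ f with hg
    have hU1 : U₁ᴴ * U₁ = 1 := by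
      have := hU₁.1
      rwa [Matrix.star_eq_conjTranspose] at this
    have hU0 : U₀ * U₀ᴴ = 1 := by
      have := hU₀.2
      rwa [Matrix.star_eq_conjTranspose] at this
    have step1 : U₁ᴴ *ᵥ (U₁ *ᵥ (Sd' *ᵥ g)) = Sd' *ᵥ g := by
      rw [Matrix.mulVec_mulVec, hU1, Matrix.one_mulVec]
    have hSg : ∀ k : Fin K, (Sd' *ᵥ g) k = g ⟨(k : ℕ), by omega⟩ := by
      intro k
      have hk := k.isLt
      show ∑ n : Fin (2 * K), Sd' k n * g n = _
      have hterm : ∀ n : Fin (2 * K), Sd' k n * g n =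
          if (n : ℕ) = (k : ℕ) then g n else 0 := by
        intro n
        rw [hSd']
        by_cases h : (n : ℕ) < K
        · by_cases h2 : (n : ℕ) = (k : ℕ) <;> simp [h, h2]
        · have hg0 : g n = 0 := hf n (le_of_not_gt h)
          have h2 : ¬((n : ℕ) = (k : ℕ)) := by omega
          simp [h, h2, hg0]
      simp_rw [hterm]
      exact sum_delta' (k : ℕ) (by omega) _
    have hmid : (Matrix.diagonal fun i : Fin (2 * K) => if (i : ℕ) < K then (1 : ℂ) else 0)
        *ᵥ (Sd'ᵀ *ᵥ (Sd' *ᵥ g)) = g := by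
      funext i
      rw [Matrix.mulVec_diagonal]
      by_cases hi : (i : ℕ) < K
      · rw [if_pos hi, one_mul]
        have hstep : (Sd'ᵀ *ᵥ (Sd' *ᵥ g)) i = (Sd' *ᵥ g) ⟨(i : ℕ), hi⟩ := by
          show ∑ kk : Fin K, Sd'ᵀ i kk * (Sd' *ᵥ g) kk = _
          have hterm : ∀ kk : Fin K, Sd'ᵀ i kk * (Sd' *ᵥ g) kk =
              if (kk : ℕ) = (i : ℕ) then (Sd' *ᵥ g) kk else 0 := by
            intro kk
            rw [Matrix.transpose_apply, hSd', if_pos hi]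
            by_cases h : (i : ℕ) = (kk : ℕ)
            · rw [if_pos h, if_pos h.symm, one_mul]
            · rw [if_neg h, if_neg (Ne.symm h), zero_mul]
          simp_rw [hterm]
          exact sum_delta' (i : ℕ) hi _
        rw [hstep, hSg ⟨(i : ℕ), hi⟩]
      · rw [if_neg hi, zero_mul]
        exact (hf i (le_of_not_gt hi)).symm
    rw [step1, hmid, hg, Matrix.mulVec_mulVec, hU0, Matrix.one_mulVec]
end
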